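/- Let G be a group with a finite word gauge and μ a probability measure on G with finite first moment Σ_g |g| μ(g) < ∞. Then μ has finite entropy H(μ) = −Σ_g μ(g) log μ(g) < ∞. -/

import Mathlib

/-!
Comparing `μ` with the weights `x ^ |g|` (Gibbs' inequality) gives
`-μ(g) log μ(g) ≤ μ(g) |g| log (1/x) + x ^ |g|`. The first term is summable by the moment
assumption, and the second is summable as soon as `C x < 1`, since there are at most
`C ^ (k + 1)` elements of length `k`.
-/

open Real

lemma Real.negMulLog_le_mul_neg_log_add {p y : ℝ} (hp : 0 ≤ p) (hy : 0 < y) :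
    negMulLog p ≤ p * -log y + y := by
  calc negMulLog p = p / y * negMulLog y + y * negMulLog (p / y) := by
        rw [← negMulLog_mul, mul_div_cancel₀ _ hy.ne']
    _ ≤ p / y * negMulLog y + y * (1 - p / y) := by
        gcongr; exact negMulLog_le_one_sub_self (by positivity)
    _ = p * -log y + y - p := by rw [negMulLog]; field_simp; ring
    _ ≤ p * -log y + y := by linarith

lemma summable_pow_of_card_le {α : Type*} (ℓ : α → ℕ) {C x : ℝ} (hC : 0 ≤ C) (hx : 0 ≤ x)
    (hCx : C * x < 1) (hfin : ∀ k : ℕ, {a : α | ℓ a ≤ k}.Finite)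
    (hball : ∀ k : ℕ, (Nat.card {a : α // ℓ a ≤ k} : ℝ) ≤ C ^ (k + 1)) :
    Summable fun a => x ^ ℓ a := by
  have hfiber (k : ℕ) : (ℓ ⁻¹' {k}).Finite := (hfin k).subset fun a ha => ha.le
  refine (summable_partition (fun a => pow_nonneg hx _) (s := fun k => ℓ ⁻¹' {k})
    fun a => ⟨ℓ a, rfl, fun _ h => h.symm⟩).2 ⟨fun k => ?_, ?_⟩
  · have := (hfiber k).to_subtype
    exact .of_finite
  · refine .of_nonneg_of_le (fun k => tsum_nonneg fun _ => pow_nonneg hx _) (fun k => ?_)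
      ((summable_geometric_of_lt_one (by positivity) hCx).mul_left C)
    have hcard : Nat.card (ℓ ⁻¹' {k}) ≤ Nat.card {a : α // ℓ a ≤ k} :=
      Nat.card_mono (hfin k) fun a ha => ha.le
    calc ∑' a : ℓ ⁻¹' {k}, x ^ ℓ a = ∑' a : ℓ ⁻¹' {k}, x ^ k := tsum_congr fun a => by rw [a.2]
      _ = Nat.card (ℓ ⁻¹' {k}) * x ^ k := by rw [tsum_const, nsmul_eq_mul]
      _ ≤ C ^ (k + 1) * x ^ k := by gcongr; exact (Nat.cast_le.2 hcard).trans (hball k)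
      _ = C * (C * x) ^ k := by ring

theorem stmt17_general {G : Type*}
    (ℓ : G → ℕ) (C : ℝ) (hC : 1 ≤ C)
    (hfin : ∀ k : ℕ, {g : G | ℓ g ≤ k}.Finite)
    (hball : ∀ k : ℕ, (Nat.card {g : G // ℓ g ≤ k} : ℝ) ≤ C ^ (k + 1))
    (μ : PMF G)
    (hmom : ∑' g : G, (ℓ g : ENNReal) * μ g ≠ ⊤) :
    Summable fun g : G => Real.negMulLog ((μ g).toReal) := by
  obtain ⟨x, hx, hCx⟩ : ∃ x : ℝ, 0 < x ∧ C * x < 1 :=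
    ⟨(2 * C)⁻¹, by positivity, by field_simp; linarith⟩
  have hmoment : Summable fun g => (μ g).toReal * ℓ g := by
    simpa only [ENNReal.toReal_mul, ENNReal.toReal_natCast, mul_comm]
      using ENNReal.summable_toReal hmom
  have hweights := summable_pow_of_card_le ℓ (by positivity) hx.le hCx hfin hball
  refine .of_nonneg_of_le (fun g => negMulLog_nonneg ENNReal.toReal_nonneg ?_) (fun g => ?_)
    ((hmoment.mul_right (-log x)).add hweights)
  · exact ENNReal.toReal_le_of_le_ofReal zero_le_one (by simpa using μ.coe_le_one g)
  · have := negMulLog_le_mul_neg_log_add (p := (μ g).toReal) ENNReal.toReal_nonneg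
      (pow_pos hx (ℓ g))
    rwa [log_pow, ← mul_neg, ← mul_assoc] at this

/-- Finite first moment implies finite entropy: if `ℓ` is a finite word gauge on a
group `G` (gauge sets are finite, of at most exponential growth) and `μ` is a
probability measure with finite first moment `∑ ℓ(g) μ(g) < ∞`, then `μ` has
finite entropy `H(μ) = -∑ μ(g) log μ(g) < ∞`. -/
theorem stmt17 {G : Type*} [Group G] [Countable G]
    (ℓ : G → ℕ) (C : ℝ) (hC : 1 ≤ C)
    (hfin : ∀ k : ℕ, {g : G | ℓ g ≤ k}.Finite)
    (hball : ∀ k : ℕ, (Nat.card {g : G // ℓ g ≤ k} : ℝ) ≤ C ^ (k + 1))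
    (μ : PMF G)
    (hmom : ∑' g : G, (ℓ g : ENNReal) * μ g ≠ ⊤) :
    Summable fun g : G => Real.negMulLog ((μ g).toReal) :=
  stmt17_general ℓ C hC hfin hball μ hmom
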